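/- arXiv:1412.6818 — 3 statements merged into one kernel-verified Lean document; each statement's English description precedes it below -/
import Mathlib

section
/- Let λ ∈ X and let w ∈ W be such that wλ is dominant. Then ℓ(t_λ · w⁻¹) = ℓ(t_λ) + ℓ(w⁻¹) in W_aff (note that t_λ w⁻¹ = w⁻¹ t_{wλ}). -/
open scoped BigOperators

/-- The data of a finite reduced crystallographic root system `Φ`, with a chosen system of
positive roots `pos` cut out by a homomorphism `f : X → ℝ` not vanishing on any root, inside a
finitely generated free abelian group `X` (the weight lattice).  For each root `α` we record its
coroot `coroot α : X →+ ℤ` and the associated reflection `s α : x ↦ x - ⟨x, α∨⟩ • α`, an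
automorphism of `X`.  The reflections preserve `Φ` and the coroots are equivariant for them. -/
structure RootSystemData (X : Type*) [AddCommGroup X] [Module.Free ℤ X] [Module.Finite ℤ X] where
  /-- the (finite) set of roots -/
  Φ : Finset X
  /-- the set of positive roots -/
  pos : Finset X
  /-- the coroot attached to each root, as a homomorphism `X → ℤ` -/
  coroot : X → (X →+ ℤ)
  /-- the reflection attached to each root -/
  s : X → AddAut X
  /-- a homomorphism `X → ℝ` cutting out the positive roots -/
  f : X →+ ℝ
  f_ne : ∀ α ∈ Φ, f α ≠ 0
  pos_def : ∀ α, α ∈ pos ↔ α ∈ Φ ∧ 0 < f α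
  pairing_self : ∀ α ∈ Φ, coroot α α = 2
  s_apply : ∀ α ∈ Φ, ∀ x : X, s α x = x - coroot α x • α
  s_stable : ∀ α ∈ Φ, ∀ β ∈ Φ, s α β ∈ Φ
  reduced : ∀ α ∈ Φ, ∀ n : ℤ, n • α ∈ Φ → n = 1 ∨ n = -1
  coroot_equivariant : ∀ α ∈ Φ, ∀ β ∈ Φ, ∀ x : X, coroot (s α β) x = coroot β ((s α).symm x)

namespace RootSystemData

variable {X : Type*} [AddCommGroup X] [Module.Free ℤ X] [Module.Finite ℤ X] [DecidableEq X]
  (R : RootSystemData X)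

/-- The Weyl group `W`, the subgroup of `Aut(X)` generated by the reflections `s_α`, `α ∈ Φ`. -/
def W : AddSubgroup (AddAut X) := AddSubgroup.closure (R.s '' ↑R.Φ)

/-- A weight `λ` is dominant if `⟨λ, α∨⟩ ≥ 0` for all positive roots `α`. -/
def IsDominant (lam : X) : Prop := ∀ α ∈ R.pos, 0 ≤ R.coroot α lam

/-- `ℓ(u) = #{α ∈ Φ⁺ : uα ∈ −Φ⁺}` for `u` in the (finite) Weyl group. -/
def lenW (u : AddAut X) : ℕ := (R.pos.filter (fun α => -(u α) ∈ R.pos)).card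

/-- The Iwahori–Matsumoto length of the element `u t_λ` of the extended affine Weyl group
`W_aff = W ⋉ X`:
`ℓ(u t_λ) = Σ_{α ∈ Φ⁺ ∩ u⁻¹(Φ⁺)} |⟨λ, α∨⟩| + Σ_{α ∈ Φ⁺ ∩ u⁻¹(−Φ⁺)} |1 + ⟨λ, α∨⟩|`. -/
def lenAff (u : AddAut X) (lam : X) : ℕ :=
  ∑ α ∈ R.pos.filter (fun α => u α ∈ R.pos), (R.coroot α lam).natAbs
    + ∑ α ∈ R.pos.filter (fun α => -(u α) ∈ R.pos), (1 + R.coroot α lam).natAbs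

/-- The length of the translation `t_λ`: `ℓ(t_λ) = Σ_{α ∈ Φ⁺} |⟨λ, α∨⟩|`. -/
def lenT (lam : X) : ℕ := ∑ α ∈ R.pos, (R.coroot α lam).natAbs

end RootSystemData


/-!
Since `wλ` is dominant, each term `|1 + ⟨wλ, α∨⟩|` of the Iwahori–Matsumoto formula for
`w⁻¹ t_{wλ}` equals `1 + |⟨wλ, α∨⟩|`, so `ℓ(w⁻¹ t_{wλ}) = ℓ(t_{wλ}) + ℓ(w⁻¹)`. Finally
`ℓ(t_{wλ}) = ℓ(t_λ)`: summed over all of `Φ`, `|⟨μ, α∨⟩|` gives `2 ℓ(t_μ)`, and `W` permutes `Φ`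
compatibly with the coroots.
-/

open scoped Pointwise

namespace RootSystemData

variable {X : Type*} [AddCommGroup X] [Module.Free ℤ X] [Module.Finite ℤ X] (R : RootSystemData X)

section Reflections

variable {R} {α : X} (hα : α ∈ R.Φ)
include hα

lemma coroot_s_self (x : X) : R.coroot α (R.s α x) = -R.coroot α x := by
  rw [R.s_apply α hα, map_sub, map_zsmul, R.pairing_self α hα, smul_eq_mul]
  ring

lemma s_s_apply (x : X) : R.s α (R.s α x) = x := by
  rw [R.s_apply α hα (R.s α x), coroot_s_self hα, R.s_apply α hα x, neg_zsmul]
  abel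

lemma s_symm_apply (x : X) : (R.s α).symm x = R.s α x :=
  (AddEquiv.symm_apply_eq _).2 (s_s_apply hα x).symm

lemma s_self : R.s α α = -α := by
  rw [R.s_apply α hα, R.pairing_self α hα, two_zsmul]
  abel

lemma neg_mem_Φ : -α ∈ R.Φ := s_self hα ▸ R.s_stable α hα α hα

lemma coroot_neg (x : X) : R.coroot (-α) x = -R.coroot α x := by
  rw [← s_self hα, R.coroot_equivariant α hα α hα, s_symm_apply hα, coroot_s_self hα]

lemma neg_mem_pos_iff : -α ∈ R.pos ↔ α ∉ R.pos := by
  have hf := R.f_ne α hα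
  rw [R.pos_def, R.pos_def, map_neg, neg_pos]
  refine ⟨fun h h' => (h.2.trans h'.2).false, fun h => ⟨neg_mem_Φ hα, ?_⟩⟩
  exact hf.lt_or_gt.resolve_right fun hpos => h ⟨hα, hpos⟩

end Reflections

lemma mem_Φ_of_mem_pos {α : X} (hα : α ∈ R.pos) : α ∈ R.Φ := ((R.pos_def α).1 hα).1

/-- Stated with `↔` rather than as `u '' Φ ⊆ Φ`, so that it is closed under inverses without
using the finiteness of `Φ`. -/
def rootAut : AddSubgroup (AddAut X) where
  carrier := {u | (∀ β, u β ∈ R.Φ ↔ β ∈ R.Φ) ∧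
    ∀ β ∈ R.Φ, ∀ x, R.coroot (u β) x = R.coroot β (u.symm x)}
  zero_mem' := ⟨fun _ => Iff.rfl, fun _ _ _ => rfl⟩
  add_mem' := by
    rintro u v ⟨hu, hu'⟩ ⟨hv, hv'⟩
    refine ⟨fun β => (hu _).trans (hv β), fun β hβ x => ?_⟩
    exact (hu' _ ((hv β).2 hβ) x).trans (hv' β hβ _)
  neg_mem' := by
    rintro u ⟨hu, hu'⟩
    have hmem (β : X) : u.symm β ∈ R.Φ ↔ β ∈ R.Φ := by
      rw [← hu, AddEquiv.apply_symm_apply]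
    refine ⟨hmem, fun β hβ x => ?_⟩
    have := hu' _ ((hmem β).2 hβ) (u x)
    rw [AddEquiv.apply_symm_apply, AddEquiv.symm_apply_apply] at this
    exact this.symm

lemma W_le_rootAut : R.W ≤ R.rootAut := by
  refine AddSubgroup.closure_le _ |>.2 ?_
  rintro _ ⟨α, hα, rfl⟩
  refine ⟨fun β => ⟨fun h => ?_, R.s_stable α hα β⟩, R.coroot_equivariant α hα⟩
  simpa only [s_s_apply hα] using R.s_stable α hα _ h

variable {R}

lemma coroot_apply_of_mem_rootAut {u : AddAut X} (hu : u ∈ R.rootAut) {α : X} (hα : α ∈ R.Φ)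
    (x : X) : R.coroot α (u x) = R.coroot (u.symm α) x := by
  simpa using hu.2 (u.symm α) ((hu.1 _).1 (by simpa using hα)) (u x)

variable [DecidableEq X]

lemma Φ_eq_pos_union_neg : R.Φ = R.pos ∪ -R.pos := by
  ext α
  rw [Finset.mem_union, Finset.mem_neg']
  refine ⟨fun hα => ?_, ?_⟩
  · rw [neg_mem_pos_iff hα]; exact em _
  · rintro (hα | hα)
    · exact R.mem_Φ_of_mem_pos hα
    · simpa using neg_mem_Φ (R.mem_Φ_of_mem_pos hα)

lemma disjoint_pos_neg : Disjoint R.pos (-R.pos) := by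
  rw [Finset.disjoint_left]
  intro α hα hα'
  rw [Finset.mem_neg', neg_mem_pos_iff (R.mem_Φ_of_mem_pos hα)] at hα'
  exact hα' hα

lemma sum_Φ_natAbs_coroot (μ : X) :
    ∑ α ∈ R.Φ, (R.coroot α μ).natAbs = 2 * R.lenT μ := by
  rw [Φ_eq_pos_union_neg, Finset.sum_union R.disjoint_pos_neg, Finset.sum_neg_index, lenT, two_mul]
  congr 1
  refine Finset.sum_congr rfl fun α hα => ?_
  rw [coroot_neg (R.mem_Φ_of_mem_pos hα), Int.natAbs_neg]

lemma lenT_apply_of_mem_rootAut {u : AddAut X} (hu : u ∈ R.rootAut) (μ : X) :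
    R.lenT (u μ) = R.lenT μ := by
  suffices 2 * R.lenT (u μ) = 2 * R.lenT μ by omega
  rw [← sum_Φ_natAbs_coroot, ← sum_Φ_natAbs_coroot]
  refine Finset.sum_equiv u.symm.toEquiv (fun β => (neg_mem hu).1 β |>.symm) fun β hβ => ?_
  rw [coroot_apply_of_mem_rootAut hu hβ]
  rfl

lemma lenAff_of_isDominant {u : AddAut X} (hu : u ∈ R.rootAut) {μ : X} (hμ : R.IsDominant μ) :
    R.lenAff u μ = R.lenT μ + R.lenW u := by
  have hone (α : X) (hα : α ∈ R.pos) : (1 + R.coroot α μ).natAbs = 1 + (R.coroot α μ).natAbs :=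
    Int.natAbs_add_of_nonneg zero_le_one (hμ α hα)
  have hneg : R.pos.filter (fun α => -(u α) ∈ R.pos) = R.pos.filter (fun α => u α ∉ R.pos) :=
    Finset.filter_congr fun α hα => neg_mem_pos_iff ((hu.1 α).2 (R.mem_Φ_of_mem_pos hα))
  rw [lenAff, lenT, lenW, Finset.sum_congr rfl fun α hα => hone α (Finset.mem_of_mem_filter α hα),
    Finset.sum_add_distrib,
    Finset.sum_const, smul_eq_mul, mul_one, hneg, add_left_comm,
    Finset.sum_filter_add_sum_filter_not, add_comm]

end RootSystemData

/-- Let `λ ∈ X` and let `w ∈ W` be such that `wλ` is dominant.  Then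
`ℓ(t_λ · w⁻¹) = ℓ(t_λ) + ℓ(w⁻¹)` in `W_aff`.  Note that `t_λ w⁻¹ = w⁻¹ t_{wλ}`, so the
left-hand side is the Iwahori–Matsumoto length of the element `w⁻¹ t_{wλ}`. -/
theorem length_t_lambda_winv
    {X : Type*} [AddCommGroup X] [Module.Free ℤ X] [Module.Finite ℤ X] [DecidableEq X]
    (R : RootSystemData X) (lam : X) (w : AddAut X) (hw : w ∈ R.W)
    (hdom : R.IsDominant (w lam)) :
    R.lenAff w.symm (w lam) = R.lenT lam + R.lenW w.symm := by
  have hw' : w ∈ R.rootAut := R.W_le_rootAut hw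
  rw [R.lenAff_of_isDominant (u := w.symm) (neg_mem hw') hdom, R.lenT_apply_of_mem_rootAut hw']
end

section
/- Let i ∈ I, and let Δ and X be objects of D satisfying: (a) Hom_D(Δ, ∇^j⟨m⟩[n]) = 0 for all j ∈ I, m, n ∈ ℤ unless (j, n, m) = (i, 0, 0), and Hom_D(Δ, ∇^i) is one-dimensional over 𝕜; (b) the same conditions hold with Δ replaced by X; and (c) there exists a nonzero morphism φ : Δ → ∇^i whose cone lies in D_{<i}. Then X is isomorphic to Δ. -/
open CategoryTheory CategoryTheory.Limits CategoryTheory.Pretriangulated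

/-!
Since `Hom(X, D_{<i}) = 0`, a nonzero map `X ⟶ ∇^i` lifts through `φ` to some `ψ : X ⟶ Δ`.
Composition with `ψ` is then bijective on `Hom(Δ, ∇^j⟨m⟩[n])` for all `j, m, n`: both sides
vanish except for `(i, 0, 0)`, where it is a nonzero map between lines. Completing `ψ` to a
distinguished triangle `X ⟶ Δ ⟶ K ⟶ X[1]`, the long exact `Hom(-, ∇^j⟨m⟩[n])` sequence
gives `Hom(K, ∇^j⟨m⟩[n]) = 0`, hence `Hom(K, -) = 0` on all of `D`; so `K = 0` and `ψ` is an
isomorphism.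
-/

/-- The smallest class of objects of a (pre)triangulated category `D` containing a given set `S`
of objects and forming a strictly full triangulated subcategory: it contains `S` and the zero
objects, and is closed under isomorphism, under the shifts `⟦n⟧` (`n ∈ ℤ`), and under extensions
(given a distinguished triangle, if the two outer objects belong to the class then so does the
middle one). -/
inductive triangulatedClosure {D : Type*} [Category D] [Preadditive D] [HasZeroObject D]
    [HasShift D ℤ] [∀ n : ℤ, (shiftFunctor D n).Additive] [Pretriangulated D]
    (S : Set D) : D → Prop
  | mem {X : D} : X ∈ S → triangulatedClosure S X
  | zero {X : D} : IsZero X → triangulatedClosure S X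
  | iso {X Y : D} : triangulatedClosure S X → (X ≅ Y) → triangulatedClosure S Y
  | shift {X : D} (n : ℤ) : triangulatedClosure S X → triangulatedClosure S (X⟦n⟧)
  | ext {T : Triangle D} : T ∈ distinguishedTriangles →
      triangulatedClosure S T.obj₁ → triangulatedClosure S T.obj₃ → triangulatedClosure S T.obj₂

lemma bijective_comp_iff_of_iso {C : Type*} [Category C] {X Δ W W' : C} (ψ : X ⟶ Δ)
    (e : W ≅ W') :
    Function.Bijective (fun g : Δ ⟶ W => ψ ≫ g) ↔
      Function.Bijective (fun g : Δ ⟶ W' => ψ ≫ g) := by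
  rw [← EquivLike.comp_bijective _ (Iso.homCongr (Iso.refl X) e),
    ← EquivLike.bijective_comp (Iso.homCongr (Iso.refl Δ) e).symm]
  congr!
  funext g
  simp [Iso.homCongr_apply]

lemma bijective_comp_of_forall_eq_zero {C : Type*} [Category C] [Preadditive C]
    {X Δ W : C} (ψ : X ⟶ Δ) (hΔ : ∀ g : Δ ⟶ W, g = 0) (hX : ∀ f : X ⟶ W, f = 0) :
    Function.Bijective (fun g : Δ ⟶ W => ψ ≫ g) :=
  ⟨fun g₁ g₂ _ => (hΔ g₁).trans (hΔ g₂).symm,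
    fun f => ⟨0, (comp_zero).trans (hX f).symm⟩⟩

lemma bijective_comp_of_finrank_eq_one {𝕜 : Type*} [Field 𝕜] {C : Type*} [Category C]
    [Preadditive C] [Linear 𝕜 C] {X Δ W : C} {ψ : X ⟶ Δ} {φ : Δ ⟶ W}
    (hΔ : Module.finrank 𝕜 (Δ ⟶ W) = 1) (hX : Module.finrank 𝕜 (X ⟶ W) = 1)
    (hψφ : ψ ≫ φ ≠ 0) : Function.Bijective (fun g : Δ ⟶ W => ψ ≫ g) := by
  have := isSimpleModule_iff_finrank_eq_one.mpr hΔ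
  have := isSimpleModule_iff_finrank_eq_one.mpr hX
  exact LinearMap.bijective_of_ne_zero (f := Linear.leftComp 𝕜 W ψ)
    fun h => hψφ (LinearMap.congr_fun h φ)

lemma exists_shift_map_comp_eq {C : Type*} [Category C] [HasShift C ℤ] {X Δ V : C}
    {ψ : X ⟶ Δ} (hψ : Function.Surjective (fun g : Δ ⟶ V => ψ ≫ g)) (a : ℤ)
    (h : X⟦a⟧ ⟶ V⟦a⟧) : ∃ k : Δ⟦a⟧ ⟶ V⟦a⟧, ψ⟦a⟧' ≫ k = h := by
  obtain ⟨k, hk : ψ ≫ k = _⟩ := hψ ((shiftFunctor C a).preimage h)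
  exact ⟨k⟦a⟧', by rw [← Functor.map_comp, hk, Functor.map_preimage]⟩

section

variable {D : Type*} [Category D] [Preadditive D] [HasZeroObject D]
    [HasShift D ℤ] [∀ n : ℤ, (shiftFunctor D n).Additive] [Pretriangulated D]

namespace triangulatedClosure

variable {S : Set D} {A : D}

lemma shift_hom_eq_zero (hS : ∀ Y ∈ S, ∀ (n : ℤ) (f : A ⟶ Y⟦n⟧), f = 0) {Z : D}
    (hZ : triangulatedClosure S Z) (n : ℤ) (f : A ⟶ Z⟦n⟧) : f = 0 := by
  induction hZ generalizing n with
  | mem hY => exact hS _ hY n f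
  | zero hY => exact ((shiftFunctor D n).map_isZero hY).eq_of_tgt f 0
  | iso _ e ih =>
    rw [← cancel_mono ((shiftFunctor D n).map e.inv), ih n (f ≫ _), zero_comp]
  | @shift Y k _ ih =>
    rw [← cancel_mono ((shiftFunctorAdd D k n).app Y).inv, ih (k + n) (f ≫ _), zero_comp]
  | ext hT _ _ ih₁ ih₃ =>
    obtain ⟨g, rfl⟩ :=
      Triangle.coyoneda_exact₂ _ (Triangle.shift_distinguished _ hT n) f (ih₃ n _)
    obtain rfl : g = 0 := ih₁ n g
    exact zero_comp

lemma hom_eq_zero (hS : ∀ Y ∈ S, ∀ (n : ℤ) (f : A ⟶ Y⟦n⟧), f = 0) {Z : D}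
    (hZ : triangulatedClosure S Z) (f : A ⟶ Z) : f = 0 := by
  rw [← cancel_mono ((shiftFunctorZero D ℤ).inv.app Z), shift_hom_eq_zero hS hZ 0 (f ≫ _),
    zero_comp]

end triangulatedClosure

/-- In the exact sequence `Hom(X[1], Y[n]) ⟶ Hom(K, Y[n]) ⟶ Hom(Δ, Y[n]) ⟶ Hom(X, Y[n])` the
last map is injective, and the first vanishes because `ψ ≫ -` is onto in degree `n - 1`. -/
lemma hom_obj₃_shift_eq_zero_of_bijective {X Δ K Y : D} {ψ : X ⟶ Δ} {α : Δ ⟶ K}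
    {β : K ⟶ X⟦(1 : ℤ)⟧} (hT : Triangle.mk ψ α β ∈ distTriang D)
    (hψ : ∀ n : ℤ, Function.Bijective (fun g : Δ ⟶ Y⟦n⟧ => ψ ≫ g)) (n : ℤ)
    (g : K ⟶ Y⟦n⟧) : g = 0 := by
  have hψα : ψ ≫ α = 0 := comp_distTriang_mor_zero₁₂ _ hT
  have hαg : α ≫ g = 0 := (hψ n).1 (by simp only [reassoc_of% hψα, zero_comp, comp_zero])
  obtain ⟨h, rfl⟩ : ∃ h : X⟦(1 : ℤ)⟧ ⟶ Y⟦n⟧, g = β ≫ h :=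
    Triangle.yoneda_exact₃ _ hT g hαg
  let e := (shiftFunctorAdd' D (n - 1) 1 n (by omega)).app Y
  obtain ⟨k, hk⟩ := exists_shift_map_comp_eq (hψ (n - 1)).2 1 (h ≫ e.hom)
  have hh : h = ψ⟦1⟧' ≫ k ≫ e.inv := by
    rw [← Category.assoc, hk, Category.assoc, e.hom_inv_id, Category.comp_id]
  have hβψ : β ≫ ψ⟦1⟧' = 0 := comp_distTriang_mor_zero₃₁ _ hT
  rw [hh, reassoc_of% hβψ, zero_comp]

end

/-- Let `𝕜` be a field, `D` a `𝕜`-linear triangulated category with an autoequivalence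
`X ↦ X⟨1⟩` (encoded here by the family of objects `∇^j⟨m⟩ = nabla j m`, `j ∈ I`, `m ∈ ℤ`,
which generate `D` as a triangulated category), and `(I, ≤)` a partially ordered set.  Let
`i ∈ I` and let `Δ`, `X` be objects of `D` satisfying:
(a) `Hom_D(Δ, ∇^j⟨m⟩[n]) = 0` for all `j ∈ I`, `m, n ∈ ℤ` unless `(j, n, m) = (i, 0, 0)`,
and `Hom_D(Δ, ∇^i)` is one-dimensional over `𝕜`;
(b) the same conditions hold with `Δ` replaced by `X`;
(c) there exists a nonzero morphism `φ : Δ → ∇^i` whose cone lies in `D_{<i}`, the smallest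
strictly full triangulated subcategory containing the `∇^j⟨m⟩` with `j < i`.
Then `X` is isomorphic to `Δ`. -/
theorem standard_object_unique {𝕜 : Type*} [Field 𝕜]
    {D : Type*} [Category D] [Preadditive D] [CategoryTheory.Linear 𝕜 D] [HasZeroObject D]
    [HasShift D ℤ] [∀ n : ℤ, (shiftFunctor D n).Additive] [Pretriangulated D]
    {I : Type*} [PartialOrder I] (nabla : I → ℤ → D)
    (hgen : ∀ Z : D, triangulatedClosure {Y | ∃ (j : I) (m : ℤ), Y = nabla j m} Z)
    (i : I) (Δ X : D)
    (hΔvanish : ∀ (j : I) (m n : ℤ), ¬(j = i ∧ n = 0 ∧ m = 0) →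
      ∀ f : Δ ⟶ (nabla j m)⟦n⟧, f = 0)
    (hΔdim : Module.finrank 𝕜 (Δ ⟶ nabla i 0) = 1)
    (hXvanish : ∀ (j : I) (m n : ℤ), ¬(j = i ∧ n = 0 ∧ m = 0) →
      ∀ f : X ⟶ (nabla j m)⟦n⟧, f = 0)
    (hXdim : Module.finrank 𝕜 (X ⟶ nabla i 0) = 1)
    (hcone : ∃ (φ : Δ ⟶ nabla i 0), φ ≠ 0 ∧
      ∃ (C : D) (g : nabla i 0 ⟶ C) (h : C ⟶ Δ⟦(1 : ℤ)⟧),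
        Triangle.mk φ g h ∈ distinguishedTriangles ∧
        triangulatedClosure {Y | ∃ (j : I), j < i ∧ ∃ (m : ℤ), Y = nabla j m} C) :
    Nonempty (X ≅ Δ) := by
  obtain ⟨φ, -, C, _, _, hφ, hC⟩ := hcone
  have hXC : ∀ f : X ⟶ C, f = 0 := triangulatedClosure.hom_eq_zero
    (by rintro _ ⟨j, hj, m, rfl⟩ n f; exact hXvanish j m n (fun h => hj.ne h.1) f) hC
  have : Nontrivial (X ⟶ nabla i 0) :=
    Module.nontrivial_of_finrank_pos (R := 𝕜) (by omega)
  obtain ⟨f₀, hf₀⟩ := exists_ne (0 : X ⟶ nabla i 0)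
  obtain ⟨ψ, hψφ⟩ : ∃ ψ : X ⟶ Δ, f₀ = ψ ≫ φ :=
    Triangle.coyoneda_exact₂ _ hφ f₀ (hXC _)
  have hψ (j : I) (m n : ℤ) :
      Function.Bijective (fun g : Δ ⟶ (nabla j m)⟦n⟧ => ψ ≫ g) := by
    by_cases hc : j = i ∧ n = 0 ∧ m = 0
    · obtain ⟨rfl, rfl, rfl⟩ := hc
      rw [← bijective_comp_iff_of_iso ψ ((shiftFunctorZero D ℤ).app (nabla j 0)).symm]
      exact bijective_comp_of_finrank_eq_one hΔdim hXdim (hψφ ▸ hf₀)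
    · exact bijective_comp_of_forall_eq_zero ψ (hΔvanish j m n hc) (hXvanish j m n hc)
  obtain ⟨K, α, β, hT⟩ := distinguished_cocone_triangle ψ
  have hK : IsZero K := (IsZero.iff_id_eq_zero K).2 <| triangulatedClosure.hom_eq_zero
    (by rintro _ ⟨j, m, rfl⟩; exact hom_obj₃_shift_eq_zero_of_bijective hT (hψ j m))
    (hgen K) _
  have : IsIso ψ := (Triangle.isZero₃_iff_isIso₁ _ hT).1 hK
  exact ⟨asIso ψ⟩
end

section
/- Let k be a commutative ring, A a commutative Noetherian k-algebra, G an injective A-module, and M a flat k-module. Then G ⊗_k M is an injective A-module. -/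
/-!
By Baer's criterion it suffices to extend maps `I → G ⊗[k] M` from ideals `I` of `A`. Since `A`
is Noetherian, `I` is finitely presented, and for finitely presented `N` and flat `M` the natural
map `Hom_A(N, G) ⊗[k] M → Hom_A(N, G ⊗[k] M)` is bijective: it is for free `N`, and the general
case follows from a presentation by the five lemma, as `Hom_A(-, G)` is left exact and `- ⊗[k] M`
is exact. The surjection `Hom_A(A, G) → Hom_A(I, G)` stays surjective after tensoring with `M`.

`Module.Injective A G` only tests extensions along modules in the universe of `G`, so Baer's
criterion for `G` needs an argument when `A` is larger. With `B = Ann(G)`, Artin–Rees gives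
`B ^ s ∩ I ⊆ B * I` for some `s`, so a map `I → G`, which kills `B * I`, vanishes on `B ^ s ∩ I`
and can be extended through a pushout along `I → A ⧸ B ^ s`. That pushout is small: `A ⧸ B`
embeds into `End(G)`, and `A ⧸ B ^ s` is an iterated extension of finitely generated
`A ⧸ B`-modules.
-/

open TensorProduct

universe v

section Smallness

variable {R : Type*} [CommRing R]

theorem Submodule.small_of_small_quotient {V : Type*} [AddCommGroup V] [Module R V]
    (N : Submodule R V) [Small.{v} N] [h : Small.{v} (V ⧸ N)] : Small.{v} V :=
  have : Small.{v} (V ⧸ N.toAddSubgroup) := h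
  small_map (AddSubgroup.addGroupEquivQuotientProdAddSubgroup (s := N.toAddSubgroup))

theorem Module.IsTorsionBySet.small {M : Type*} [AddCommGroup M] [Module R M] [Module.Finite R M]
    {B : Ideal R} [Small.{v} (R ⧸ B)] (h : Module.IsTorsionBySet R M B) : Small.{v} M :=
  letI := h.module
  have : Module.Finite (R ⧸ B) M := .of_restrictScalars_finite R _ _
  Module.Finite.small (R ⧸ B) M

variable (R) in
theorem small_quotient_annihilator (Q : Type v) [AddCommGroup Q] [Module R Q] :
    Small.{v} (R ⧸ Module.annihilator R Q) :=
  have : Small.{v} (AddMonoid.End Q) := small_of_injective DFunLike.coe_injective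
  small_of_injective (RingHom.kerLift_injective (Module.toAddMonoidEnd R Q))

theorem small_quotient_pow [IsNoetherianRing R] (B : Ideal R) [Small.{v} (R ⧸ B)] (n : ℕ) :
    Small.{v} (R ⧸ B ^ n) := by
  induction n with
  | zero =>
    rw [pow_zero, Ideal.one_eq_top]
    infer_instance
  | succ n ih =>
    let K : Submodule R (R ⧸ B ^ (n + 1)) := Submodule.map (B ^ (n + 1)).mkQ (B ^ n)
    have hK : Module.IsTorsionBySet R K B := by
      rintro ⟨_, t, ht, rfl⟩ ⟨b, hb⟩
      apply Subtype.ext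
      show (Submodule.Quotient.mk (b • t) : R ⧸ B ^ (n + 1)) = 0
      rw [Submodule.Quotient.mk_eq_zero, pow_succ']
      exact Ideal.mul_mem_mul hb ht
    have : Small.{v} K := hK.small
    have : Small.{v} ((R ⧸ B ^ (n + 1)) ⧸ K) :=
      small_map (Submodule.quotientQuotientEquivQuotient (B ^ (n + 1)) (B ^ n)
        (Ideal.pow_le_pow_right n.le_succ)).toEquiv
    exact Submodule.small_of_small_quotient K

theorem exists_pow_inf_le_mul [IsNoetherianRing R] (B I : Ideal R) : ∃ s, B ^ s ⊓ I ≤ B * I := by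
  obtain ⟨k, hk⟩ := Ideal.exists_pow_inf_eq_pow_smul B (I : Submodule R R)
  refine ⟨k + 1, ?_⟩
  have := hk (k + 1) k.le_succ
  simp only [smul_eq_mul, Ideal.mul_top, Nat.add_sub_cancel_left, pow_one] at this
  rw [this]
  exact Ideal.mul_mono_right inf_le_right

end Smallness

section Baer

variable {R : Type*} [CommRing R] {Q : Type v} [AddCommGroup Q] [Module R Q]

theorem Module.Injective.exists_extension_of_small_quotient (hQ : Module.Injective R Q)
    {I J : Ideal R} [Small.{v} (R ⧸ J)] (f : I →ₗ[R] Q) (hf : ∀ x : I, (x : R) ∈ J → f x = 0) :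
    ∃ g : R →ₗ[R] Q, ∀ x (hx : x ∈ I), g x = f ⟨x, hx⟩ := by
  let L := LinearMap.range ((J.mkQ ∘ₗ I.subtype).prod (-f))
  let ι : Q →ₗ[R] ((R ⧸ J) × Q) ⧸ L := L.mkQ ∘ₗ LinearMap.inr R _ _
  have hι : Function.Injective ι := by
    refine (injective_iff_map_eq_zero ι).mpr fun q hq => ?_
    obtain ⟨x, hx⟩ := (Submodule.Quotient.mk_eq_zero L).mp hq
    have hxJ : (x : R) ∈ J := Ideal.Quotient.eq_zero_iff_mem.mp (by simpa using congrArg Prod.fst hx)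
    have hxq : -f x = q := by simpa using congrArg Prod.snd hx
    rw [← hxq, hf x hxJ, neg_zero]
  let e := Shrink.linearEquiv R (((R ⧸ J) × Q) ⧸ L)
  obtain ⟨h, hh⟩ := hQ.out (e.symm.toLinearMap ∘ₗ ι) (e.symm.injective.comp hι) LinearMap.id
  refine ⟨h ∘ₗ e.symm.toLinearMap ∘ₗ L.mkQ ∘ₗ LinearMap.inl R _ _ ∘ₗ J.mkQ, fun x hx => ?_⟩
  have hxL : L.mkQ (J.mkQ x, 0) = ι (f ⟨x, hx⟩) := by
    simp only [ι, LinearMap.comp_apply, LinearMap.inr_apply, Submodule.mkQ_apply,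
      Submodule.Quotient.eq]
    exact ⟨⟨x, hx⟩, by simp⟩
  show h (e.symm (L.mkQ (J.mkQ x, 0))) = _
  rw [hxL]
  exact hh _

theorem annihilator_mul_le_map_ker {I : Ideal R} (f : I →ₗ[R] Q) :
    Module.annihilator R Q * I ≤ (LinearMap.ker f).map I.subtype :=
  Ideal.mul_le.mpr fun b hb i hi =>
    ⟨b • ⟨i, hi⟩, LinearMap.mem_ker.mpr (by rw [map_smul, Module.mem_annihilator.mp hb]), rfl⟩

theorem Module.Baer.of_injective_of_isNoetherianRing [IsNoetherianRing R]
    (hQ : Module.Injective R Q) : Module.Baer R Q := by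
  intro I f
  obtain ⟨s, hs⟩ := exists_pow_inf_le_mul (Module.annihilator R Q) I
  have := small_quotient_annihilator R Q
  have := small_quotient_pow (Module.annihilator R Q) s
  refine hQ.exists_extension_of_small_quotient (J := Module.annihilator R Q ^ s) f fun x hx => ?_
  obtain ⟨y, hy, hyx⟩ := annihilator_mul_le_map_ker f (hs ⟨hx, x.2⟩)
  rwa [← Subtype.ext hyx]

end Baer

section HomTensor

variable (k A : Type*) [CommRing k] [CommRing A] [Algebra k A]
  (G M : Type*) [AddCommGroup G] [Module k G] [Module A G] [IsScalarTower k A G]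
  [AddCommGroup M] [Module k M]

noncomputable def homTensorToHom (N : Type*) [AddCommGroup N] [Module A N] :
    (N →ₗ[A] G) ⊗[k] M →ₗ[k] (N →ₗ[A] G ⊗[k] M) :=
  TensorProduct.lift <| LinearMap.mk₂ k
    (fun f m => (AlgebraTensorModule.mk k A G M).flip m ∘ₗ f)
    (fun _ _ _ => by ext; simp [add_tmul])
    (fun _ _ _ => by ext; simp [smul_tmul'])
    (fun _ _ _ => by ext; simp)
    (fun _ _ _ => by ext; simp)

variable {k A G M}

@[simp]
theorem homTensorToHom_tmul {N : Type*} [AddCommGroup N] [Module A N] (f : N →ₗ[A] G) (m : M)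
    (x : N) : homTensorToHom k A G M N (f ⊗ₜ m) x = f x ⊗ₜ m :=
  rfl

theorem lcomp_comp_homTensorToHom {N N' : Type*} [AddCommGroup N] [Module A N]
    [AddCommGroup N'] [Module A N'] (u : N' →ₗ[A] N) :
    LinearMap.lcomp k (G ⊗[k] M) u ∘ₗ homTensorToHom k A G M N =
      homTensorToHom k A G M N' ∘ₗ (LinearMap.lcomp k G u).rTensor M := by
  ext f m x
  rfl

theorem homTensorToHom_pi (ι : Type*) [Fintype ι] [DecidableEq ι] :
    homTensorToHom k A G M (ι → A) =
      ((LinearEquiv.piRing A G ι k).rTensor M ≪≫ₗ TensorProduct.piLeft k M (fun _ => G) ≪≫ₗ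
        (LinearEquiv.piRing A (G ⊗[k] M) ι k).symm).toLinearMap := by
  ext f m x
  simp

theorem bijective_homTensorToHom_pi (ι : Type*) [Fintype ι] [DecidableEq ι] :
    Function.Bijective (homTensorToHom k A G M (ι → A)) := by
  rw [homTensorToHom_pi]
  exact LinearEquiv.bijective _

theorem bijective_homTensorToHom [Module.Flat k M] (N : Type*) [AddCommGroup N] [Module A N]
    [Module.FinitePresentation A N] :
    Function.Bijective (homTensorToHom k A G M N) := by
  obtain ⟨n, m, g, f, hg, hfg⟩ := Module.FinitePresentation.exists_fin' A N
  exact LinearMap.bijective_of_bijective_of_injective_of_left_exact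
    ((LinearMap.lcomp k G g).rTensor M) ((LinearMap.lcomp k G f).rTensor M)
    (LinearMap.lcomp k (G ⊗[k] M) g) (LinearMap.lcomp k (G ⊗[k] M) f)
    (homTensorToHom k A G M N) _ _
    (lcomp_comp_homTensorToHom g) (lcomp_comp_homTensorToHom f)
    (Module.Flat.rTensor_exact M (LinearMap.exact_lcomp_of_exact_of_surjective G hfg hg))
    (LinearMap.exact_lcomp_of_exact_of_surjective (G ⊗[k] M) hfg hg)
    (bijective_homTensorToHom_pi _) (bijective_homTensorToHom_pi _).1
    (Module.Flat.rTensor_preserves_injective_linearMap _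
      (LinearMap.lcomp_injective_of_surjective g hg))
    (LinearMap.lcomp_injective_of_surjective g hg)

theorem Module.Baer.tensor_of_flat [IsNoetherianRing A] [Module.Flat k M]
    (hG : Module.Baer A G) : Module.Baer A (G ⊗[k] M) := by
  rw [Module.Baer.iff_surjective] at hG ⊢
  intro I g
  have : Module.FinitePresentation A I := Module.finitePresentation_of_finite A I
  obtain ⟨x, rfl⟩ := (bijective_homTensorToHom (k := k) (G := G) (M := M) I).2 g
  obtain ⟨y, rfl⟩ := LinearMap.rTensor_surjective M (g := LinearMap.lcomp k G I.subtype) (hG I) x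
  exact ⟨homTensorToHom k A G M A y, LinearMap.congr_fun (lcomp_comp_homTensorToHom I.subtype) y⟩

end HomTensor

/-- Let `k` be a commutative ring, `A` a commutative Noetherian `k`-algebra, `G` an injective
`A`-module, and `M` a flat `k`-module.  Then `G ⊗_k M` is an injective `A`-module. -/
theorem injective_tensor_flat (k A : Type*) [CommRing k] [CommRing A] [Algebra k A]
    [IsNoetherianRing A]
    (G M : Type*) [AddCommGroup G] [Module k G] [Module A G] [IsScalarTower k A G]
    [AddCommGroup M] [Module k M] [Module.Flat k M]
    (hG : Module.Injective A G) : Module.Injective A (G ⊗[k] M) :=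
  (Module.Baer.of_injective_of_isNoetherianRing hG).tensor_of_flat.injective
end
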